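/- Let X and Y be finite simple graphs, each with at least one edge, on n_X and n_Y vertices, with maximal degrees Δ_X, Δ_Y, minimal degrees δ_X, δ_Y, and largest Laplacian eigenvalues λ_X, λ_Y respectively. Then the independence number of the Cartesian product X □ Y satisfies α(X □ Y) ≤ n_X·n_Y·(1 − (Δ_X + Δ_Y)/(λ_X + λ_Y)) + α((X □ Y)')·((Δ_X + Δ_Y) − (δ_X + δ_Y))/((λ_X + λ_Y) − (δ_X + δ_Y)), where (X □ Y)' is the derived graph of X □ Y. -/

import Mathlib

/-!
Let `S` be a maximum independent set of a graph with an edge, split into the vertices `S₁` of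
maximal degree `Δ` and the rest `S₂`, an independent set of the derived graph. Put `y = 1` on
`S₁`, `y = t` on `S₂`, `y = 0` elsewhere, and subtract the mean of `y`. Since `S` is independent,
the Laplacian form of this vector is `∑_{v ∈ S} deg v · y_v² ≥ Δ |S₁| + δ t² |S₂|`, and it is at
most `λ` times the squared norm. The choice `t = (λ - Δ)/(λ - δ)` turns this into the bound; the
same inequality for a single vertex of degree `Δ` gives `Δ < λ`, so the denominators are positive.

For `X □ Y` the Laplacian acts as `L_X ⊗ 1 + 1 ⊗ L_Y`, so its form splits into the forms of `X`
on the columns and of `Y` on the rows; hence `λ = λ_X + λ_Y` (with equality at `f ⊗ g` for top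
eigenvectors `f`, `g`), while maximal and minimal degrees add.
-/

open Finset

/-- The independence number: the largest size of a set of pairwise non-adjacent vertices. -/
noncomputable def indepNum {V : Type*} (G : SimpleGraph V) : ℕ :=
  sSup {n | ∃ s : Finset V, (∀ v ∈ s, ∀ w ∈ s, ¬ G.Adj v w) ∧ s.card = n}

/-- The degree of a vertex: the number of its neighbours. -/
noncomputable def deg {V : Type*} (G : SimpleGraph V) (v : V) : ℕ :=
  (G.neighborSet v).ncard

/-- The minimal degree. -/
noncomputable def minDeg {V : Type*} (G : SimpleGraph V) : ℕ :=
  sInf (Set.range (deg G))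

/-- The maximal degree. -/
noncomputable def maxDeg {V : Type*} (G : SimpleGraph V) : ℕ :=
  sSup (Set.range (deg G))

/-- The largest eigenvalue of the Laplacian matrix `L = D - A`. -/
noncomputable def lapMax {V : Type*} [Fintype V] (G : SimpleGraph V) : ℝ :=
  letI := Classical.decEq V
  letI := Classical.decRel G.Adj
  ⨆ i, (SimpleGraph.posSemidef_lapMatrix ℝ G).1.eigenvalues i

/-- The derived graph: the induced subgraph on the vertices of non-maximal degree. -/
noncomputable def derived {V : Type*} (G : SimpleGraph V) :
    SimpleGraph {v : V | deg G v < maxDeg G} :=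
  G.induce {v : V | deg G v < maxDeg G}

open Matrix

section Degrees

variable {V W : Type*}

theorem deg_eq_degree [Fintype V] (G : SimpleGraph V) [DecidableRel G.Adj] (v : V) :
    deg G v = G.degree v :=
  Set.ncard_eq_toFinset_card' _

theorem deg_le_maxDeg [Finite V] (G : SimpleGraph V) (v : V) : deg G v ≤ maxDeg G :=
  le_csSup (Set.finite_range _).bddAbove ⟨v, rfl⟩

theorem minDeg_le_deg (G : SimpleGraph V) (v : V) : minDeg G ≤ deg G v :=
  Nat.sInf_le ⟨v, rfl⟩

theorem exists_deg_eq_maxDeg [Finite V] [Nonempty V] (G : SimpleGraph V) :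
    ∃ v, deg G v = maxDeg G :=
  Nat.sSup_mem (Set.range_nonempty _) (Set.finite_range _).bddAbove

theorem exists_deg_eq_minDeg [Nonempty V] (G : SimpleGraph V) : ∃ v, deg G v = minDeg G :=
  Nat.sInf_mem (Set.range_nonempty _)

variable [Fintype V] [Fintype W] (X : SimpleGraph V) (Y : SimpleGraph W)

theorem deg_boxProd (p : V × W) : deg (X □ Y) p = deg X p.1 + deg Y p.2 := by
  classical
  simp only [deg_eq_degree, SimpleGraph.degree_boxProd]

variable [Nonempty V] [Nonempty W]

theorem maxDeg_boxProd : maxDeg (X □ Y) = maxDeg X + maxDeg Y := by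
  obtain ⟨p, hp⟩ := exists_deg_eq_maxDeg (X □ Y)
  obtain ⟨a, ha⟩ := exists_deg_eq_maxDeg X
  obtain ⟨b, hb⟩ := exists_deg_eq_maxDeg Y
  apply le_antisymm
  · rw [← hp, deg_boxProd]
    exact add_le_add (deg_le_maxDeg X p.1) (deg_le_maxDeg Y p.2)
  · simpa only [deg_boxProd, ha, hb] using deg_le_maxDeg (X □ Y) (a, b)

theorem minDeg_boxProd : minDeg (X □ Y) = minDeg X + minDeg Y := by
  obtain ⟨p, hp⟩ := exists_deg_eq_minDeg (X □ Y)
  obtain ⟨a, ha⟩ := exists_deg_eq_minDeg X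
  obtain ⟨b, hb⟩ := exists_deg_eq_minDeg Y
  apply le_antisymm
  · simpa only [deg_boxProd, ha, hb] using minDeg_le_deg (X □ Y) (a, b)
  · rw [← hp, deg_boxProd]
    exact add_le_add (minDeg_le_deg X p.1) (minDeg_le_deg Y p.2)

end Degrees

theorem indepNum_eq_indepNum {V : Type*} (G : SimpleGraph V) : indepNum G = G.indepNum := by
  unfold indepNum SimpleGraph.indepNum
  congr 1
  ext n
  constructor
  · rintro ⟨s, hs, rfl⟩
    exact ⟨s, fun v hv w hw _ => hs v hv w hw, rfl⟩
  · rintro ⟨s, hs, rfl⟩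
    refine ⟨s, fun v hv w hw => ?_, rfl⟩
    rcases eq_or_ne v w with rfl | hvw
    · exact G.irrefl
    · exact hs hv hw hvw

namespace Matrix.IsHermitian

variable {n : Type*} [Fintype n] [DecidableEq n] {A : Matrix n n ℝ} (hA : A.IsHermitian)
include hA

theorem dotProduct_mulVec_le_iSup_eigenvalues_mul (x : n → ℝ) :
    x ⬝ᵥ (A *ᵥ x) ≤ (⨆ i, hA.eigenvalues i) * (x ⬝ᵥ x) := by
  set μ := ⨆ i, hA.eigenvalues i
  set U : Matrix n n ℝ := (hA.eigenvectorUnitary : Matrix n n ℝ)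
  have hU : U * Uᴴ = 1 := by
    simpa [star_eq_conjTranspose] using mem_unitaryGroup_iff.mp hA.eigenvectorUnitary.2
  have hdiag : μ • 1 - A = U * diagonal (fun i => μ - hA.eigenvalues i) * Uᴴ := by
    have hd : diagonal (fun i => μ - hA.eigenvalues i) =
        μ • 1 - diagonal (RCLike.ofReal ∘ hA.eigenvalues) := by
      ext i j
      by_cases h : i = j <;> simp [h]
    rw [hd, Matrix.mul_sub, Matrix.sub_mul, Matrix.mul_smul, Matrix.smul_mul, Matrix.mul_one, hU]
    exact congrArg (μ • 1 - ·) hA.spectral_theorem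
  have hpsd : (μ • 1 - A).PosSemidef := by
    rw [hdiag]
    refine (PosSemidef.diagonal fun i => ?_).mul_mul_conjTranspose_same _
    simpa using le_ciSup (Set.finite_range _).bddAbove i
  have := hpsd.dotProduct_mulVec_nonneg x
  simp only [star_trivial, sub_mulVec, smul_mulVec, one_mulVec, dotProduct_sub,
    dotProduct_smul, smul_eq_mul] at this
  linarith

theorem exists_mulVec_eq_iSup_eigenvalues_smul [Nonempty n] :
    ∃ x : n → ℝ, x ⬝ᵥ x = 1 ∧ A *ᵥ x = (⨆ i, hA.eigenvalues i) • x := by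
  obtain ⟨i₀, hi₀⟩ := Finite.exists_max hA.eigenvalues
  have hsup : (⨆ i, hA.eigenvalues i) = hA.eigenvalues i₀ :=
    le_antisymm (ciSup_le hi₀) (le_ciSup (Set.finite_range _).bddAbove i₀)
  refine ⟨hA.eigenvectorBasis i₀, ?_, hsup ▸ hA.mulVec_eigenvectorBasis i₀⟩
  have h : inner ℝ (hA.eigenvectorBasis i₀) (hA.eigenvectorBasis i₀) = 1 := by
    rw [real_inner_self_eq_norm_sq, hA.eigenvectorBasis.orthonormal.1 i₀, one_pow]
  rwa [EuclideanSpace.inner_eq_star_dotProduct, star_trivial] at h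

end Matrix.IsHermitian

section Laplacian

variable {V : Type*} [Fintype V] [DecidableEq V] (G : SimpleGraph V) [DecidableRel G.Adj]

theorem lapMax_eq_iSup_eigenvalues :
    lapMax G = ⨆ i, (G.posSemidef_lapMatrix ℝ).1.eigenvalues i := by
  unfold lapMax
  congr!

theorem dotProduct_lapMatrix_mulVec_le (x : V → ℝ) :
    x ⬝ᵥ (G.lapMatrix ℝ *ᵥ x) ≤ lapMax G * (x ⬝ᵥ x) := by
  rw [lapMax_eq_iSup_eigenvalues]
  exact (G.posSemidef_lapMatrix ℝ).1.dotProduct_mulVec_le_iSup_eigenvalues_mul x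

theorem exists_lapMatrix_mulVec_eq_lapMax_smul [Nonempty V] :
    ∃ x : V → ℝ, x ⬝ᵥ x = 1 ∧ G.lapMatrix ℝ *ᵥ x = lapMax G • x := by
  rw [lapMax_eq_iSup_eigenvalues]
  exact (G.posSemidef_lapMatrix ℝ).1.exists_mulVec_eq_iSup_eigenvalues_smul

theorem dotProduct_lapMatrix_mulVec_sub_const (x : V → ℝ) (c : ℝ) :
    (x - fun _ => c) ⬝ᵥ (G.lapMatrix ℝ *ᵥ (x - fun _ => c)) = x ⬝ᵥ (G.lapMatrix ℝ *ᵥ x) := by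
  simp only [← toLinearMap₂'_apply', SimpleGraph.lapMatrix_toLinearMap₂', Pi.sub_apply,
    sub_sub_sub_cancel_right]

theorem dotProduct_lapMatrix_mulVec_of_adj (y : V → ℝ) (hy : ∀ i j, G.Adj i j → y i * y j = 0) :
    y ⬝ᵥ (G.lapMatrix ℝ *ᵥ y) = ∑ i, G.degree i * y i * y i := by
  have hadj : y ⬝ᵥ (G.adjMatrix ℝ *ᵥ y) = 0 := by
    rw [SimpleGraph.dotProduct_mulVec_adjMatrix]
    exact sum_eq_zero fun i _ => sum_eq_zero fun j _ => ite_eq_right_iff.2 (hy i j)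
  rw [SimpleGraph.lapMatrix, sub_mulVec, dotProduct_sub, SimpleGraph.dotProduct_mulVec_degMatrix,
    hadj, sub_zero]

theorem sum_degree_mul_sq_le_lapMax (S : Finset V) (hS : G.IsIndepSet S) (w : V → ℝ) :
    ∑ v ∈ S, G.degree v * w v ^ 2
      ≤ lapMax G * (∑ v ∈ S, w v ^ 2 - (∑ v ∈ S, w v) ^ 2 / Fintype.card V) := by
  set n : ℝ := (Fintype.card V : ℝ) with hn_def
  set y : V → ℝ := fun v => if v ∈ S then w v else 0
  set c : ℝ := (∑ v ∈ S, w v) / n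
  have hy : ∀ i j, G.Adj i j → y i * y j = 0 := by
    intro i j hij
    by_cases hi : i ∈ S
    · by_cases hj : j ∈ S
      · exact absurd hij (hS hi hj hij.ne)
      · simp [y, hj]
    · simp [y, hi]
  have hquad : (y - fun _ => c) ⬝ᵥ (G.lapMatrix ℝ *ᵥ (y - fun _ => c))
      = ∑ v ∈ S, G.degree v * w v ^ 2 := by
    rw [dotProduct_lapMatrix_mulVec_sub_const, dotProduct_lapMatrix_mulVec_of_adj G y hy]
    have hterm : ∀ v, G.degree v * y v * y v = if v ∈ S then G.degree v * w v ^ 2 else 0 := by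
      intro v
      by_cases hv : v ∈ S <;> simp [y, hv, sq, mul_assoc]
    simp only [hterm, sum_ite_mem, univ_inter]
  have hnorm : (y - fun _ => c) ⬝ᵥ (y - fun _ => c)
      = ∑ v ∈ S, w v ^ 2 - (∑ v ∈ S, w v) ^ 2 / n := by
    have hsum : ∑ v, y v = ∑ v ∈ S, w v := by simp [y, sum_ite_mem]
    have hsq : ∑ v, y v * y v = ∑ v ∈ S, w v ^ 2 := by
      simp [y, sum_ite_mem, ite_mul, sq]
    have hexp : ∀ v, (y v - c) * (y v - c) = y v * y v - 2 * c * y v + c ^ 2 := fun v => by ring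
    simp only [dotProduct, Pi.sub_apply, hexp, sum_add_distrib, sum_sub_distrib, ← mul_sum,
      sum_const, card_univ, nsmul_eq_mul, hsum, hsq, ← hn_def]
    rcases eq_or_ne n 0 with hn | hn
    · simp [c, hn]
    · simp only [c]
      field_simp
      ring
  rw [← hquad, ← hnorm]
  exact dotProduct_lapMatrix_mulVec_le G _

end Laplacian

theorem maxDeg_lt_lapMax {V : Type*} [Fintype V] (G : SimpleGraph V) (hG : ∃ v w, G.Adj v w) :
    (maxDeg G : ℝ) < lapMax G := by
  classical
  obtain ⟨a, b, hab⟩ := hG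
  have : Nonempty V := ⟨a⟩
  obtain ⟨v, hv⟩ := exists_deg_eq_maxDeg G
  have hΔ : (0 : ℝ) < maxDeg G := by
    have := deg_le_maxDeg G a
    rw [deg_eq_degree G] at this
    exact_mod_cast (G.degree_pos_iff_exists_adj a).2 ⟨b, hab⟩ |>.trans_le this
  have hn : (0 : ℝ) < Fintype.card V := by exact_mod_cast Fintype.card_pos
  -- the test vector `1_v - 1/n` for a vertex `v` of maximal degree
  have h := sum_degree_mul_sq_le_lapMax G {v} (by simp) 1
  simp only [sum_singleton, Pi.one_apply, one_pow, mul_one, ← deg_eq_degree, hv] at h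
  have h01 : 0 ≤ 1 - 1 / (Fintype.card V : ℝ) := by
    rw [sub_nonneg, div_le_one hn]
    exact_mod_cast Fintype.card_pos
  by_contra! hle
  nlinarith [mul_le_mul_of_nonneg_right hle h01, mul_pos hΔ (one_div_pos.2 hn)]

section BoxProd

variable {V W : Type*} [Fintype V] [Fintype W] [DecidableEq V] [DecidableEq W]
  (X : SimpleGraph V) (Y : SimpleGraph W) [DecidableRel X.Adj] [DecidableRel Y.Adj]
  [DecidableRel (X □ Y).Adj]

theorem lapMatrix_boxProd_mulVec_apply (z : V × W → ℝ) (p : V × W) :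
    ((X □ Y).lapMatrix ℝ *ᵥ z) p
      = (X.lapMatrix ℝ *ᵥ fun a => z (a, p.2)) p.1
        + (Y.lapMatrix ℝ *ᵥ fun b => z (p.1, b)) p.2 := by
  simp only [SimpleGraph.lapMatrix_mulVec_apply, SimpleGraph.degree_boxProd,
    SimpleGraph.neighborFinset_boxProd, sum_disjUnion, sum_product, sum_singleton]
  push_cast
  ring

theorem dotProduct_lapMatrix_boxProd_mulVec (z : V × W → ℝ) :
    z ⬝ᵥ ((X □ Y).lapMatrix ℝ *ᵥ z)
      = ∑ b, (fun a => z (a, b)) ⬝ᵥ (X.lapMatrix ℝ *ᵥ fun a => z (a, b))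
        + ∑ a, (fun b => z (a, b)) ⬝ᵥ (Y.lapMatrix ℝ *ᵥ fun b => z (a, b)) := by
  simp only [dotProduct, lapMatrix_boxProd_mulVec_apply, mul_add, sum_add_distrib,
    Fintype.sum_prod_type]
  rw [sum_comm]

theorem lapMax_boxProd [Nonempty V] [Nonempty W] : lapMax (X □ Y) = lapMax X + lapMax Y := by
  apply le_antisymm
  · obtain ⟨z, hz, hLz⟩ := exists_lapMatrix_mulVec_eq_lapMax_smul (X □ Y)
    have hcols_sq : ∑ b, ((fun a => z (a, b)) ⬝ᵥ fun a => z (a, b)) = 1 := by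
      rw [← hz]
      simp only [dotProduct, Fintype.sum_prod_type]
      exact sum_comm
    have hrows_sq : ∑ a, ((fun b => z (a, b)) ⬝ᵥ fun b => z (a, b)) = 1 := by
      rw [← hz]
      simp only [dotProduct, Fintype.sum_prod_type]
    have hcols : ∑ b, (fun a => z (a, b)) ⬝ᵥ (X.lapMatrix ℝ *ᵥ fun a => z (a, b)) ≤ lapMax X :=
      calc _ ≤ ∑ b, lapMax X * ((fun a => z (a, b)) ⬝ᵥ fun a => z (a, b)) :=
            sum_le_sum fun b _ => dotProduct_lapMatrix_mulVec_le X _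
        _ = lapMax X := by rw [← mul_sum, hcols_sq, mul_one]
    have hrows : ∑ a, (fun b => z (a, b)) ⬝ᵥ (Y.lapMatrix ℝ *ᵥ fun b => z (a, b)) ≤ lapMax Y :=
      calc _ ≤ ∑ a, lapMax Y * ((fun b => z (a, b)) ⬝ᵥ fun b => z (a, b)) :=
            sum_le_sum fun a _ => dotProduct_lapMatrix_mulVec_le Y _
        _ = lapMax Y := by rw [← mul_sum, hrows_sq, mul_one]
    calc lapMax (X □ Y) = z ⬝ᵥ ((X □ Y).lapMatrix ℝ *ᵥ z) := by
          rw [hLz, dotProduct_smul, hz, smul_eq_mul, mul_one]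
      _ ≤ lapMax X + lapMax Y := by
          rw [dotProduct_lapMatrix_boxProd_mulVec]
          exact add_le_add hcols hrows
  · obtain ⟨f, hf, hLf⟩ := exists_lapMatrix_mulVec_eq_lapMax_smul X
    obtain ⟨g, hg, hLg⟩ := exists_lapMatrix_mulVec_eq_lapMax_smul Y
    set z : V × W → ℝ := fun p => f p.1 * g p.2
    have hz : z ⬝ᵥ z = 1 :=
      calc z ⬝ᵥ z = (f ⬝ᵥ f) * (g ⬝ᵥ g) := by
            simp only [dotProduct, Fintype.sum_prod_type, sum_mul_sum, z]
            exact sum_congr rfl fun a _ => sum_congr rfl fun b _ => by ring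
        _ = 1 := by rw [hf, hg, one_mul]
    have hLz : (X □ Y).lapMatrix ℝ *ᵥ z = (lapMax X + lapMax Y) • z := by
      ext p
      have hcol : (fun a => z (a, p.2)) = g p.2 • f := by ext a; simp [z, mul_comm]
      have hrow : (fun b => z (p.1, b)) = f p.1 • g := by ext b; simp [z]
      rw [lapMatrix_boxProd_mulVec_apply, hcol, hrow, mulVec_smul, mulVec_smul, hLf, hLg]
      simp only [Pi.smul_apply, smul_eq_mul, z]
      ring
    simpa [hLz, hz] using dotProduct_lapMatrix_mulVec_le (X □ Y) z

end BoxProd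

theorem card_filter_deg_lt_maxDeg_le_indepNum_derived {V : Type*} [Finite V] (G : SimpleGraph V)
    [DecidablePred fun v => deg G v < maxDeg G] {S : Finset V} (hS : G.IsIndepSet S) :
    #{v ∈ S | deg G v < maxDeg G} ≤ indepNum (derived G) := by
  rw [indepNum_eq_indepNum, ← card_subtype]
  refine SimpleGraph.IsIndepSet.card_le_indepNum fun v hv w hw hvw => ?_
  rw [mem_coe, mem_subtype] at hv hw
  exact hS hv hw (Subtype.coe_injective.ne hvw)

theorem maxDeg_mul_add_minDeg_mul_le {V : Type*} [Fintype V] [DecidableEq V]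
    (G : SimpleGraph V) [DecidableRel G.Adj] {S : Finset V} (hS : G.IsIndepSet S) (t : ℝ) :
    (maxDeg G : ℝ) * #{v ∈ S | ¬deg G v < maxDeg G}
        + minDeg G * t ^ 2 * #{v ∈ S | deg G v < maxDeg G}
      ≤ lapMax G * (#{v ∈ S | ¬deg G v < maxDeg G} + t ^ 2 * #{v ∈ S | deg G v < maxDeg G}
        - (#{v ∈ S | ¬deg G v < maxDeg G} + t * #{v ∈ S | deg G v < maxDeg G}) ^ 2
          / Fintype.card V) := by
  set w : V → ℝ := fun v => if deg G v < maxDeg G then t else 1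
  have hdeg : ∑ v ∈ S, (G.degree v : ℝ) * w v ^ 2
      = ∑ v ∈ S with ¬deg G v < maxDeg G, (G.degree v : ℝ)
        + ∑ v ∈ S with deg G v < maxDeg G, (G.degree v : ℝ) * t ^ 2 := by
    rw [← sum_filter_not_add_sum_filter _ (fun v => deg G v < maxDeg G)]
    congr 1 <;> refine sum_congr rfl fun v hv => ?_ <;> simp_all [w]
  have hmax : ∑ v ∈ S with ¬deg G v < maxDeg G, (G.degree v : ℝ)
      = maxDeg G * #{v ∈ S | ¬deg G v < maxDeg G} := by
    rw [sum_congr rfl fun v hv => ?_, sum_const, nsmul_eq_mul, mul_comm]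
    rw [mem_filter, not_lt] at hv
    rw [← deg_eq_degree, (deg_le_maxDeg G v).antisymm hv.2]
  have hmin : minDeg G * t ^ 2 * #{v ∈ S | deg G v < maxDeg G}
      ≤ ∑ v ∈ S with deg G v < maxDeg G, (G.degree v : ℝ) * t ^ 2 := by
    rw [← nsmul_eq_mul', ← sum_const]
    gcongr with v
    rw [← deg_eq_degree]
    exact_mod_cast minDeg_le_deg G v
  have hsq : ∑ v ∈ S, w v ^ 2
      = #{v ∈ S | ¬deg G v < maxDeg G} + t ^ 2 * #{v ∈ S | deg G v < maxDeg G} := by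
    simp [w, apply_ite (· ^ 2), sum_ite, add_comm, mul_comm]
  have hsum : ∑ v ∈ S, w v
      = #{v ∈ S | ¬deg G v < maxDeg G} + t * #{v ∈ S | deg G v < maxDeg G} := by
    simp [w, sum_ite, add_comm, mul_comm]
  have := sum_degree_mul_sq_le_lapMax G S hS w
  rw [hdeg, hmax, hsq, hsum] at this
  linarith

theorem add_le_of_forall_quadratic_le {n Δ δ lam s₁ s₂ : ℝ} (hn : 0 < n) (hδ : 0 ≤ δ) (hδΔ : δ ≤ Δ)
    (hΔ : Δ < lam) (hs₁ : 0 ≤ s₁) (hs₂ : 0 ≤ s₂)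
    (h : ∀ t : ℝ, Δ * s₁ + δ * t ^ 2 * s₂ ≤ lam * (s₁ + t ^ 2 * s₂ - (s₁ + t * s₂) ^ 2 / n)) :
    s₁ + s₂ ≤ n * (1 - Δ / lam) + s₂ * (Δ - δ) / (lam - δ) := by
  have hlam : 0 < lam := by linarith
  have hb : 0 < lam - δ := by linarith
  set t := (lam - Δ) / (lam - δ)
  set x := s₁ + t * s₂
  have ht : (lam - δ) * t = lam - Δ := mul_div_cancel₀ _ hb.ne'
  have hx : 0 ≤ x := by positivity
  -- `t` is chosen so that `(lam - δ) t² = (lam - Δ) t`, which makes the right side linear in `x`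
  have hquad : lam * x ^ 2 / n ≤ (lam - Δ) * x := by linear_combination h t + t * s₂ * ht
  have hx_le : x ≤ (lam - Δ) * n / lam := by
    rw [le_div_iff₀ hlam]
    rcases hx.eq_or_lt with hx0 | hxpos
    · rw [← hx0]
      nlinarith
    · rw [div_le_iff₀ hn] at hquad
      nlinarith
  have hrhs : n * (1 - Δ / lam) + s₂ * (Δ - δ) / (lam - δ)
      = (lam - Δ) * n / lam + (1 - t) * s₂ := by
    simp only [t]
    field_simp
    ring
  linarith

theorem indepNum_le_relative_bound {V : Type*} [Fintype V] (G : SimpleGraph V)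
    (hG : ∃ v w, G.Adj v w) :
    (indepNum G : ℝ) ≤ Fintype.card V * (1 - (maxDeg G : ℝ) / lapMax G)
      + indepNum (derived G) * ((maxDeg G : ℝ) - minDeg G) / (lapMax G - minDeg G) := by
  classical
  have : Nonempty V := hG.nonempty
  obtain ⟨S, hS, hS_card⟩ := G.exists_isNIndepSet_indepNum
  have hsplit :
      #{v ∈ S | ¬deg G v < maxDeg G} + #{v ∈ S | deg G v < maxDeg G} = indepNum G := by
    rw [add_comm, card_filter_add_card_filter_not, hS_card, indepNum_eq_indepNum]
  have hδΔ : (minDeg G : ℝ) ≤ maxDeg G := by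
    obtain ⟨v⟩ := ‹Nonempty V›
    exact_mod_cast (minDeg_le_deg G v).trans (deg_le_maxDeg G v)
  have hΔ : (maxDeg G : ℝ) < lapMax G := maxDeg_lt_lapMax G hG
  have hbound := add_le_of_forall_quadratic_le (by exact_mod_cast Fintype.card_pos)
    (Nat.cast_nonneg _) hδΔ hΔ (Nat.cast_nonneg _) (Nat.cast_nonneg _)
    (maxDeg_mul_add_minDeg_mul_le G hS)
  rw [← Nat.cast_add, hsplit] at hbound
  refine hbound.trans (add_le_add_right ?_ _)
  gcongr
  · linarith
  · exact card_filter_deg_lt_maxDeg_le_indepNum_derived G hS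

/-- The relative bound for a Cartesian product `X □ Y`:
`α(X □ Y) ≤ n_X n_Y (1 - (Δ_X + Δ_Y)/(λ_X + λ_Y))
  + α((X □ Y)') ((Δ_X + Δ_Y) - (δ_X + δ_Y)) / ((λ_X + λ_Y) - (δ_X + δ_Y))`. -/
theorem relative_bound_boxProd {V W : Type*} [Fintype V] [Fintype W]
    (X : SimpleGraph V) (Y : SimpleGraph W)
    (hX : ∃ v w, X.Adj v w) (hY : ∃ v w, Y.Adj v w) :
    (indepNum (X.boxProd Y) : ℝ)
      ≤ (Fintype.card V : ℝ) * (Fintype.card W : ℝ)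
          * (1 - ((maxDeg X : ℝ) + (maxDeg Y : ℝ)) / (lapMax X + lapMax Y))
        + (indepNum (derived (X.boxProd Y)) : ℝ)
          * (((maxDeg X : ℝ) + (maxDeg Y : ℝ)) - ((minDeg X : ℝ) + (minDeg Y : ℝ)))
          / ((lapMax X + lapMax Y) - ((minDeg X : ℝ) + (minDeg Y : ℝ))) := by
  classical
  obtain ⟨a, a', ha⟩ := hX
  obtain ⟨b, -⟩ := hY
  have : Nonempty V := ⟨a⟩
  have : Nonempty W := ⟨b⟩
  have hbound := indepNum_le_relative_bound (X □ Y)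
    ⟨(a, b), (a', b), SimpleGraph.boxProd_adj_left.2 ha⟩
  simpa only [maxDeg_boxProd, minDeg_boxProd, lapMax_boxProd, Fintype.card_prod, Nat.cast_mul,
    Nat.cast_add] using hbound
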